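/- Let X be a finite-dimensional Banach space with numerical radius a norm on L(X) and T ∈ L(X)_w. If the dual set J_w(T) = { f ∈ (L(X)_w)* : ‖f‖ = 1, f(T) = w(T) } is a singleton, then there exist an extreme point x₀* of B_{X*} and an extreme point x₀ of B_X with x₀*(x₀) = 1 such that the numerical radius attainment set M_{w(T)} = { (x, x*) ∈ S_X × S_{X*} : x*(x) = 1, |x*(Tx)| = w(T) } equals { (μ x₀, conj(μ) x₀*) : |μ| = 1 }. -/

import Mathlib

variable {𝕜 : Type*} [RCLike 𝕜] {X : Type*} [NormedAddCommGroup X] [NormedSpace 𝕜 X]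

/-- The numerical radius of a bounded linear operator on a Banach space. -/
noncomputable def nrad (T : X →L[𝕜] X) : ℝ :=
  sSup {r : ℝ | ∃ (x : X) (f : X →L[𝕜] 𝕜), ‖x‖ = 1 ∧ ‖f‖ = 1 ∧ f x = 1 ∧ r = ‖f (T x)‖}

/-- The functional `x* ⊗ x : T ↦ x*(Tx)` on `L(X)`. -/
noncomputable def tensor (f : X →L[𝕜] 𝕜) (x : X) : (X →L[𝕜] X) →L[𝕜] 𝕜 :=
  f.comp (ContinuousLinearMap.apply 𝕜 X x)

/-- The dual norm induced on functionals by the numerical radius norm. -/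
noncomputable def wdual (g : (X →L[𝕜] X) →L[𝕜] 𝕜) : ℝ :=
  sSup {r : ℝ | ∃ T : X →L[𝕜] X, nrad T ≤ 1 ∧ r = ‖g T‖}

/-- The set `J_w(T)` of norm-one supporting functionals of `T` in `(L(X)_w)*`. -/
noncomputable def Jw (T : X →L[𝕜] X) : Set ((X →L[𝕜] X) →L[𝕜] 𝕜) :=
  {g | wdual g = 1 ∧ g T = (nrad T : 𝕜)}

/-- The numerical radius attainment set `M_{w(T)}`. -/
noncomputable def Mw (T : X →L[𝕜] X) : Set (X × (X →L[𝕜] 𝕜)) :=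
  {p | ‖p.1‖ = 1 ∧ ‖p.2‖ = 1 ∧ p.2 p.1 = 1 ∧ ‖p.2 (T p.1)‖ = nrad T}

/-!
Let `w = w(T)`. Smoothness forces `w > 0`: if `w = 0` then `J_w(T)` is symmetric, so its only
element would be `0`, which has dual norm `0`. In finite dimensions `w` is attained at some
`(x₀, x₀*)`. At every attaining pair `(x, x*)` the rank-one functional
`S ↦ conj(x*(Tx)) / w · x*(Sx)` lies in `J_w(T)`; by smoothness all of them coincide, and a
rank-one tensor `x* ⊗ x` determines `x` and `x*` up to reciprocal scalars. This gives
`M_{w(T)} = {(μx₀, conj(μ)x₀*) : |μ| = 1}`.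

For extremality, `1` and `x₀*(Tx₀)` are extreme points of the closed discs of radii `1` and `w` in
the strictly convex space `𝕜`. Pulling them back along `x ↦ x₀*(x)` and `x ↦ x₀*(Tx)` cuts a face
of `B_X` whose points `x` give pairs `(x, x₀*) ∈ M_{w(T)}`; by the description of `M_{w(T)}` this
face is `{x₀}`. The same argument with `x* ↦ x*(x₀)` and `x* ↦ x*(Tx₀)` applies to `x₀*`.
-/

open Set Metric

lemma IsExtreme.inter_preimage {R E F : Type*} [Semiring R] [PartialOrder R] [AddCommMonoid E]
    [Module R E] [AddCommMonoid F] [Module R F] {A : Set E} {K D : Set F} (hD : IsExtreme R K D)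
    (L : E →ₗ[R] F) (hL : MapsTo L A K) : IsExtreme R A (A ∩ L ⁻¹' D) := by
  refine ⟨inter_subset_left, fun x hx y hy z ⟨_, hz⟩ ⟨a, b, ha, hb, hab, hxyz⟩ => ⟨hx, ?_⟩⟩
  refine hD.left_mem_of_mem_openSegment (hL hx) (hL hy) hz ⟨a, b, ha, hb, hab, ?_⟩
  rw [← hxyz, map_add, map_smul, map_smul]

lemma RCLike.mem_extremePoints_closedBall {c : 𝕜} {r : ℝ} (hc : ‖c‖ = r) (hr : r ≠ 0) :
    c ∈ extremePoints ℝ (closedBall (0 : 𝕜) r) :=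
  StrictConvexSpace.sphere_subset_extremePoints_closedBall 0 hr (mem_sphere_zero_iff_norm.2 hc)

lemma norm_eq_one_of_apply_eq_one {x : X} {f : X →L[𝕜] 𝕜} (hx : ‖x‖ ≤ 1) (hf : ‖f‖ ≤ 1)
    (hfx : f x = 1) : ‖x‖ = 1 ∧ ‖f‖ = 1 := by
  have : 1 ≤ ‖f‖ * ‖x‖ := by simpa [hfx] using f.le_opNorm x
  constructor <;> nlinarith [norm_nonneg x, norm_nonneg f]

lemma tensor_apply (f : X →L[𝕜] 𝕜) (x : X) (S : X →L[𝕜] X) : tensor f x S = f (S x) := rfl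

section NumericalRadius

variable (T : X →L[𝕜] X)

lemma nrad_bddAbove :
    BddAbove {r : ℝ | ∃ (x : X) (f : X →L[𝕜] 𝕜), ‖x‖ = 1 ∧ ‖f‖ = 1 ∧ f x = 1 ∧ r = ‖f (T x)‖} := by
  refine ⟨‖T‖, ?_⟩
  rintro _ ⟨x, f, hx, hf, -, rfl⟩
  simpa [hx, hf] using f.le_opNorm_of_le (T.le_opNorm x)

lemma norm_apply_le_nrad {x : X} {f : X →L[𝕜] 𝕜} (hx : ‖x‖ = 1) (hf : ‖f‖ = 1) (hfx : f x = 1) :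
    ‖f (T x)‖ ≤ nrad T :=
  le_csSup (nrad_bddAbove T) ⟨x, f, hx, hf, hfx, rfl⟩

lemma nrad_le {r : ℝ} (hr : 0 ≤ r)
    (h : ∀ (x : X) (f : X →L[𝕜] 𝕜), ‖x‖ = 1 → ‖f‖ = 1 → f x = 1 → ‖f (T x)‖ ≤ r) :
    nrad T ≤ r :=
  Real.sSup_le (by rintro _ ⟨x, f, hx, hf, hfx, rfl⟩; exact h x f hx hf hfx) hr

lemma nrad_nonneg : 0 ≤ nrad T :=
  Real.sSup_nonneg (by rintro _ ⟨x, f, -, -, -, rfl⟩; positivity)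

lemma nrad_smul_le (c : 𝕜) : nrad (c • T) ≤ ‖c‖ * nrad T :=
  nrad_le _ (by have := nrad_nonneg T; positivity) fun x f hx hf hfx => by
    rw [smul_apply, map_smul, smul_eq_mul, norm_mul]
    gcongr
    exact norm_apply_le_nrad T hx hf hfx

end NumericalRadius

section DualNorm

variable {g : (X →L[𝕜] X) →L[𝕜] 𝕜} {r : ℝ}

lemma wdual_le (hr : 0 ≤ r) (h : ∀ S : X →L[𝕜] X, nrad S ≤ 1 → ‖g S‖ ≤ r) : wdual g ≤ r :=
  Real.sSup_le (by rintro _ ⟨S, hS, rfl⟩; exact h S hS) hr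

lemma norm_apply_le_wdual (h : ∀ S : X →L[𝕜] X, nrad S ≤ 1 → ‖g S‖ ≤ r)
    {S : X →L[𝕜] X} (hS : nrad S ≤ 1) : ‖g S‖ ≤ wdual g :=
  le_csSup ⟨r, by rintro _ ⟨S, hS, rfl⟩; exact h S hS⟩ ⟨S, hS, rfl⟩

lemma wdual_neg (g : (X →L[𝕜] X) →L[𝕜] 𝕜) : wdual (-g) = wdual g := by
  simp only [wdual, neg_apply, norm_neg]

lemma wdual_zero : wdual (0 : (X →L[𝕜] X) →L[𝕜] 𝕜) = 0 :=
  le_antisymm (wdual_le le_rfl fun _ _ => by simp)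
    (Real.sSup_nonneg (by rintro _ ⟨S, -, rfl⟩; simp))

end DualNorm

lemma smul_tensor_mem_Jw {T : X →L[𝕜] X} (hT : 0 < nrad T) {x : X} {f : X →L[𝕜] 𝕜}
    (hp : (x, f) ∈ Mw T) : (starRingEnd 𝕜 (f (T x)) / nrad T) • tensor f x ∈ Jw T := by
  obtain ⟨hx, hf, hfx, hfT⟩ := hp
  set c : 𝕜 := starRingEnd 𝕜 (f (T x)) / nrad T
  have hc : ‖c‖ = 1 := by
    simp [c, norm_div, hfT, abs_of_pos hT, hT.ne']
  have hcT : c * f (T x) = nrad T := by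
    have : (nrad T : 𝕜) ≠ 0 := by exact_mod_cast hT.ne'
    rw [div_mul_eq_mul_div, RCLike.conj_mul, hfT, div_eq_iff this]
    ring
  have hbound : ∀ S : X →L[𝕜] X, nrad S ≤ 1 → ‖(c • tensor f x) S‖ ≤ 1 := fun S hS => by
    rw [smul_apply, tensor_apply, smul_eq_mul, norm_mul, hc, one_mul]
    exact (norm_apply_le_nrad S hx hf hfx).trans hS
  have hunit : nrad ((nrad T : 𝕜)⁻¹ • T) ≤ 1 := by
    refine (nrad_smul_le T _).trans_eq ?_
    rw [norm_inv, RCLike.norm_ofReal, abs_of_pos hT, inv_mul_cancel₀ hT.ne']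
  refine ⟨le_antisymm (wdual_le zero_le_one hbound) ?_, hcT⟩
  calc (1 : ℝ) = ‖(c • tensor f x) ((nrad T : 𝕜)⁻¹ • T)‖ := by
        rw [map_smul, smul_apply, tensor_apply, smul_eq_mul, smul_eq_mul,
          hcT, norm_mul, norm_inv, RCLike.norm_ofReal, abs_of_pos hT, inv_mul_cancel₀ hT.ne']
    _ ≤ wdual (c • tensor f x) := norm_apply_le_wdual hbound hunit

lemma exists_smul_eq_of_tensor_eq {x x₀ : X} {f f₀ : X →L[𝕜] 𝕜}
    (h : tensor f x = tensor f₀ x₀) (h₀ : f₀ x₀ = 1) : ∃ μ : 𝕜, x = μ • x₀ ∧ f = μ⁻¹ • f₀ := by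
  have key : ∀ (ψ : X →L[𝕜] 𝕜) (u : X), ψ x * f u = ψ x₀ * f₀ u := fun ψ u => by
    simpa [tensor_apply] using congr($h (ψ.smulRight u))
  have hfx : f x = 1 := by simpa [tensor_apply, h₀] using congr($h 1)
  have hx : x = f₀ x • x₀ := (SeparatingDual.eq_iff_forall_dual_eq (R := 𝕜)).2 fun ψ => by
    simpa [hfx, mul_comm] using key ψ x
  have hμ : f₀ x ≠ 0 := by
    intro h0
    rw [hx, h0, zero_smul, map_zero] at hfx
    exact zero_ne_one hfx
  refine ⟨f₀ x, hx, ContinuousLinearMap.ext fun u => ?_⟩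
  rw [smul_apply, smul_eq_mul, eq_inv_mul_iff_mul_eq₀ hμ, key f₀ u, h₀, one_mul]

def unitOrbit (x₀ : X) (f₀ : X →L[𝕜] 𝕜) : Set (X × (X →L[𝕜] 𝕜)) :=
  {p | ∃ μ : 𝕜, ‖μ‖ = 1 ∧ p = (μ • x₀, (starRingEnd 𝕜 μ) • f₀)}

lemma mem_unitOrbit_self (x₀ : X) (f₀ : X →L[𝕜] 𝕜) : (x₀, f₀) ∈ unitOrbit x₀ f₀ :=
  ⟨1, norm_one, by simp⟩

lemma unitOrbit_subset_Mw {T : X →L[𝕜] X} {x₀ : X} {f₀ : X →L[𝕜] 𝕜} (h : (x₀, f₀) ∈ Mw T) :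
    unitOrbit x₀ f₀ ⊆ Mw T := by
  obtain ⟨hx₀, hf₀, hf₀x₀, hf₀T⟩ := h
  rintro _ ⟨μ, hμ, rfl⟩
  have hμμ : starRingEnd 𝕜 μ * μ = 1 := by rw [RCLike.conj_mul, hμ]; simp
  refine ⟨?_, ?_, ?_, ?_⟩
  · show ‖μ • x₀‖ = 1
    rw [norm_smul, hμ, hx₀, mul_one]
  · show ‖starRingEnd 𝕜 μ • f₀‖ = 1
    rw [norm_smul, RCLike.norm_conj, hμ, hf₀, mul_one]
  · show (starRingEnd 𝕜 μ • f₀) (μ • x₀) = 1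
    rw [smul_apply, map_smul, smul_eq_mul, smul_eq_mul, ← mul_assoc, hμμ,
      one_mul, hf₀x₀]
  · show ‖(starRingEnd 𝕜 μ • f₀) (T (μ • x₀))‖ = nrad T
    rw [map_smul, smul_apply, map_smul, smul_eq_mul, smul_eq_mul, ← mul_assoc,
      hμμ, one_mul, hf₀T]

lemma Mw_subset_unitOrbit {T : X →L[𝕜] X} (hJ : (Jw T).Subsingleton) (hT : 0 < nrad T)
    {x₀ : X} {f₀ : X →L[𝕜] 𝕜} (h₀ : (x₀, f₀) ∈ Mw T) : Mw T ⊆ unitOrbit x₀ f₀ := by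
  rintro ⟨x, f⟩ hp
  set c : 𝕜 := starRingEnd 𝕜 (f (T x)) / nrad T
  set c₀ : 𝕜 := starRingEnd 𝕜 (f₀ (T x₀)) / nrad T
  have hJeq : c • tensor f x = c₀ • tensor f₀ x₀ :=
    hJ (smul_tensor_mem_Jw hT hp) (smul_tensor_mem_Jw hT h₀)
  -- at the identity operator the two sides are `c * f x = c` and `c₀ * f₀ x₀ = c₀`
  have hcc₀ : c = c₀ := by
    simpa [tensor_apply, hp.2.2.1, h₀.2.2.1] using congr($hJeq 1)
  have hc : c ≠ 0 := by
    simp only [c, ne_eq, div_eq_zero_iff, map_eq_zero, hT.ne', or_false]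
    intro h0
    simpa [h0, hT.ne] using hp.2.2.2
  rw [← hcc₀] at hJeq
  obtain ⟨μ, hxμ, hfμ⟩ := exists_smul_eq_of_tensor_eq (smul_right_injective _ hc hJeq) h₀.2.2.1
  have hμ : ‖μ‖ = 1 := by simpa [hxμ, norm_smul, h₀.1] using hp.1
  exact ⟨μ, hμ, by rw [hxμ, hfμ, RCLike.inv_eq_conj hμ]⟩

lemma nrad_pos_of_Jw_eq_singleton {T : X →L[𝕜] X} {g : (X →L[𝕜] X) →L[𝕜] 𝕜}
    (hg : Jw T = {g}) : 0 < nrad T := by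
  refine (nrad_nonneg T).lt_of_ne' fun h0 => ?_
  have hgJ : g ∈ Jw T := hg ▸ rfl
  have hneg : -g ∈ Jw T := ⟨(wdual_neg g).trans hgJ.1, by rw [neg_apply, hgJ.2, h0]; simp⟩
  rw [hg, mem_singleton_iff, neg_eq_iff_add_eq_zero, ← two_smul 𝕜, smul_eq_zero] at hneg
  have hg0 : g = 0 := hneg.resolve_left two_ne_zero
  simpa [hg0, wdual_zero] using hgJ.1

lemma Mw_nonempty [FiniteDimensional 𝕜 X] {T : X →L[𝕜] X} (hT : 0 < nrad T) : (Mw T).Nonempty := by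
  have : ProperSpace X := FiniteDimensional.proper 𝕜 X
  have : ProperSpace (X →L[𝕜] 𝕜) := FiniteDimensional.proper 𝕜 _
  set K : Set (X × (X →L[𝕜] 𝕜)) := (sphere 0 1 ×ˢ sphere 0 1) ∩ {p | p.2 p.1 = 1}
  have hev : Continuous fun p : X × (X →L[𝕜] 𝕜) => p.2 p.1 :=
    isBoundedBilinearMap_apply.continuous.comp (continuous_snd.prodMk continuous_fst)
  have hK : IsCompact K :=
    ((isCompact_sphere 0 1).prod (isCompact_sphere 0 1)).inter_right
      (isClosed_eq hev continuous_const)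
  -- `nrad T` would be `sSup ∅ = 0` if there were no normalized pair
  have hKne : K.Nonempty := by
    obtain ⟨_, x, f, hx, hf, hfx, -⟩ : {r : ℝ | ∃ (x : X) (f : X →L[𝕜] 𝕜),
        ‖x‖ = 1 ∧ ‖f‖ = 1 ∧ f x = 1 ∧ r = ‖f (T x)‖}.Nonempty := by
      by_contra h
      rw [not_nonempty_iff_eq_empty] at h
      rw [nrad, h, Real.sSup_empty] at hT
      exact lt_irrefl _ hT
    exact ⟨(x, f), ⟨by simpa using hx, by simpa using hf⟩, hfx⟩
  have hcont : Continuous fun p : X × (X →L[𝕜] 𝕜) => ‖p.2 (T p.1)‖ :=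
    (isBoundedBilinearMap_apply.continuous.comp
      (continuous_snd.prodMk (T.continuous.comp continuous_fst))).norm
  obtain ⟨⟨x, f⟩, ⟨⟨hx, hf⟩, hfx⟩, hmax⟩ := hK.exists_isMaxOn hKne hcont.continuousOn
  rw [mem_sphere_zero_iff_norm] at hx hf
  refine ⟨(x, f), hx, hf, hfx, le_antisymm (norm_apply_le_nrad T hx hf hfx) ?_⟩
  exact nrad_le T (norm_nonneg _) fun y g hy hg hgy =>
    isMaxOn_iff.1 hmax (y, g) ⟨⟨mem_sphere_zero_iff_norm.2 hy, mem_sphere_zero_iff_norm.2 hg⟩, hgy⟩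

lemma mem_extremePoints_closedBall_of_Mw_eq [NormedSpace ℝ X] [IsScalarTower ℝ 𝕜 X]
    {T : X →L[𝕜] X} (hT : 0 < nrad T) {x₀ : X} {f₀ : X →L[𝕜] 𝕜} (hM : Mw T = unitOrbit x₀ f₀) :
    x₀ ∈ extremePoints ℝ (closedBall (0 : X) 1) := by
  obtain ⟨hx₀, hf₀, hf₀x₀, hf₀T⟩ : (x₀, f₀) ∈ Mw T := hM ▸ mem_unitOrbit_self x₀ f₀
  set B := closedBall (0 : X) 1
  set L₁ : X →ₗ[ℝ] 𝕜 := (f₀ : X →ₗ[𝕜] 𝕜).restrictScalars ℝ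
  set L₂ : X →ₗ[ℝ] 𝕜 := ((f₀ ∘L T : X →L[𝕜] 𝕜) : X →ₗ[𝕜] 𝕜).restrictScalars ℝ
  have face₁ : IsExtreme ℝ B (B ∩ L₁ ⁻¹' {1}) := by
    refine (isExtreme_singleton.2 (RCLike.mem_extremePoints_closedBall norm_one one_ne_zero)
      |>.inter_preimage L₁ fun x hx => ?_)
    simpa [L₁, hf₀] using f₀.le_opNorm_of_le (mem_closedBall_zero_iff.1 hx)
  have face₂ : IsExtreme ℝ (B ∩ L₁ ⁻¹' {1}) (B ∩ L₁ ⁻¹' {1} ∩ L₂ ⁻¹' {f₀ (T x₀)}) := by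
    refine (isExtreme_singleton.2 (RCLike.mem_extremePoints_closedBall hf₀T hT.ne')
      |>.inter_preimage L₂ fun x ⟨hxB, hx1⟩ => ?_)
    have hx : ‖x‖ = 1 := (norm_eq_one_of_apply_eq_one (mem_closedBall_zero_iff.1 hxB) hf₀.le hx1).1
    simpa [L₂] using norm_apply_le_nrad T hx hf₀ hx1
  have hface : B ∩ L₁ ⁻¹' {1} ∩ L₂ ⁻¹' {f₀ (T x₀)} = {x₀} := by
    refine eq_singleton_iff_unique_mem.2 ⟨⟨⟨by simp [B, hx₀], hf₀x₀⟩, rfl⟩, ?_⟩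
    rintro x ⟨⟨hxB, hx1 : f₀ x = 1⟩, hx2 : f₀ (T x) = f₀ (T x₀)⟩
    have hx : ‖x‖ = 1 := (norm_eq_one_of_apply_eq_one (mem_closedBall_zero_iff.1 hxB) hf₀.le hx1).1
    have hp : (x, f₀) ∈ Mw T := ⟨hx, hf₀, hx1, hx2 ▸ hf₀T⟩
    rw [hM] at hp
    obtain ⟨μ, -, hp⟩ := hp
    simp only [Prod.ext_iff] at hp
    have hμ : starRingEnd 𝕜 μ = 1 := by simpa [hf₀x₀] using congr($(hp.2) x₀).symm
    rw [← RCLike.conj_conj μ, hμ, map_one] at hp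
    rw [hp.1, one_smul]
  exact isExtreme_singleton.1 (hface ▸ face₁.trans face₂)

lemma mem_extremePoints_closedBall_dual_of_Mw_eq {T : X →L[𝕜] X} (hT : 0 < nrad T) {x₀ : X}
    {f₀ : X →L[𝕜] 𝕜} (hM : Mw T = unitOrbit x₀ f₀) :
    f₀ ∈ extremePoints ℝ (closedBall (0 : X →L[𝕜] 𝕜) 1) := by
  obtain ⟨hx₀, hf₀, hf₀x₀, hf₀T⟩ : (x₀, f₀) ∈ Mw T := hM ▸ mem_unitOrbit_self x₀ f₀
  set B := closedBall (0 : X →L[𝕜] 𝕜) 1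
  set L₁ : (X →L[𝕜] 𝕜) →ₗ[ℝ] 𝕜 := (ContinuousLinearMap.apply 𝕜 𝕜 x₀).toLinearMap.restrictScalars ℝ
  set L₂ : (X →L[𝕜] 𝕜) →ₗ[ℝ] 𝕜 :=
    (ContinuousLinearMap.apply 𝕜 𝕜 (T x₀)).toLinearMap.restrictScalars ℝ
  have face₁ : IsExtreme ℝ B (B ∩ L₁ ⁻¹' {1}) := by
    refine (isExtreme_singleton.2 (RCLike.mem_extremePoints_closedBall norm_one one_ne_zero)
      |>.inter_preimage L₁ fun f hf => ?_)
    simpa [L₁, hx₀] using f.le_of_opNorm_le (mem_closedBall_zero_iff.1 hf) x₀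
  have face₂ : IsExtreme ℝ (B ∩ L₁ ⁻¹' {1}) (B ∩ L₁ ⁻¹' {1} ∩ L₂ ⁻¹' {f₀ (T x₀)}) := by
    refine (isExtreme_singleton.2 (RCLike.mem_extremePoints_closedBall hf₀T hT.ne')
      |>.inter_preimage L₂ fun f ⟨hfB, hf1⟩ => ?_)
    have hf : ‖f‖ = 1 := (norm_eq_one_of_apply_eq_one hx₀.le (mem_closedBall_zero_iff.1 hfB) hf1).2
    simpa [L₂] using norm_apply_le_nrad T hx₀ hf hf1
  have hface : B ∩ L₁ ⁻¹' {1} ∩ L₂ ⁻¹' {f₀ (T x₀)} = {f₀} := by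
    refine eq_singleton_iff_unique_mem.2 ⟨⟨⟨by simp [B, hf₀], hf₀x₀⟩, rfl⟩, ?_⟩
    rintro f ⟨⟨hfB, hf1 : f x₀ = 1⟩, hf2 : f (T x₀) = f₀ (T x₀)⟩
    have hf : ‖f‖ = 1 := (norm_eq_one_of_apply_eq_one hx₀.le (mem_closedBall_zero_iff.1 hfB) hf1).2
    have hp : (x₀, f) ∈ Mw T := ⟨hx₀, hf, hf1, hf2 ▸ hf₀T⟩
    rw [hM] at hp
    obtain ⟨μ, -, hp⟩ := hp
    simp only [Prod.ext_iff] at hp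
    have hμ : μ = 1 := by simpa [hf₀x₀] using congr(f₀ $(hp.1)).symm
    rw [hp.2, hμ, map_one, one_smul]
  exact isExtreme_singleton.1 (hface ▸ face₁.trans face₂)

theorem stmt_14_general {X : Type*} [NormedAddCommGroup X] [NormedSpace 𝕜 X]
    [NormedSpace ℝ X] [IsScalarTower ℝ 𝕜 X] [FiniteDimensional 𝕜 X]
    (T : X →L[𝕜] X) (hsm : ∃ g, Jw T = {g}) :
    ∃ (x₀ : X) (f₀ : X →L[𝕜] 𝕜),
      x₀ ∈ Set.extremePoints ℝ (Metric.closedBall (0 : X) 1) ∧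
      f₀ ∈ Set.extremePoints ℝ (Metric.closedBall (0 : X →L[𝕜] 𝕜) 1) ∧
      f₀ x₀ = 1 ∧
      Mw T = {p | ∃ μ : 𝕜, ‖μ‖ = 1 ∧ p = (μ • x₀, (starRingEnd 𝕜 μ) • f₀)} := by
  obtain ⟨g, hg⟩ := hsm
  have hT : 0 < nrad T := nrad_pos_of_Jw_eq_singleton hg
  obtain ⟨⟨x₀, f₀⟩, h₀⟩ := Mw_nonempty hT
  have hM : Mw T = unitOrbit x₀ f₀ :=
    (Mw_subset_unitOrbit (hg ▸ subsingleton_singleton) hT h₀).antisymm (unitOrbit_subset_Mw h₀)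
  exact ⟨x₀, f₀, mem_extremePoints_closedBall_of_Mw_eq hT hM,
    mem_extremePoints_closedBall_dual_of_Mw_eq hT hM, h₀.2.2.1, hM⟩

/-- If `T` is nu-smooth, then `M_{w(T)} = {(μx₀, conj(μ)x₀*) : |μ| = 1}` for some extreme
points `x₀ ∈ E_X`, `x₀* ∈ E_{X*}` with `x₀*(x₀) = 1`. -/
theorem stmt_14 {X : Type*} [NormedAddCommGroup X] [NormedSpace 𝕜 X]
    [NormedSpace ℝ X] [IsScalarTower ℝ 𝕜 X] [FiniteDimensional 𝕜 X]
    (hw : ∀ T : X →L[𝕜] X, nrad T = 0 → T = 0)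
    (T : X →L[𝕜] X) (hsm : ∃ g, Jw T = {g}) :
    ∃ (x₀ : X) (f₀ : X →L[𝕜] 𝕜),
      x₀ ∈ Set.extremePoints ℝ (Metric.closedBall (0 : X) 1) ∧
      f₀ ∈ Set.extremePoints ℝ (Metric.closedBall (0 : X →L[𝕜] 𝕜) 1) ∧
      f₀ x₀ = 1 ∧
      Mw T = {p | ∃ μ : 𝕜, ‖μ‖ = 1 ∧ p = (μ • x₀, (starRingEnd 𝕜 μ) • f₀)} :=
  stmt_14_general T hsm
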